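/- Let p > 1 and G(s) = max(s,0)^(p+1)/(p+1). Then for all real s, τ, M: G(|s|) ≤ 2^p (G(s+τ−M) + G(s−τ−M) + G(−s+τ−M) + G(−s−τ−M)) + 2^p G(M). -/

import Mathlib

open Real

private lemma aux6 (p : ℝ) (hp : 1 < p) (G : ℝ → ℝ)
    (hG : ∀ s : ℝ, G s = (max s 0) ^ (p + 1) / (p + 1)) (a M : ℝ) :
    G a ≤ 2 ^ p * (G (a - M) + G M) := by
  have hp1 : (0:ℝ) < p + 1 := by linarith
  set u := max (a - M) 0 with hu'
  set v := max M 0 with hv'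
  have hu : 0 ≤ u := le_max_right _ _
  have hv : 0 ≤ v := le_max_right _ _
  have ha : max a 0 ≤ u + v := by
    apply max_le _ (by positivity)
    have h1 : a - M ≤ u := le_max_left _ _
    have h2 : M ≤ v := le_max_left _ _
    linarith
  have h1 : (max a 0) ^ (p + 1) ≤ (u + v) ^ (p + 1) :=
    Real.rpow_le_rpow (le_max_right _ _) ha (by linarith)
  have hc := (convexOn_rpow (show (1:ℝ) ≤ p + 1 by linarith)).2
    (Set.mem_Ici.mpr hu) (Set.mem_Ici.mpr hv)
    (by norm_num : (0:ℝ) ≤ 1/2) (by norm_num : (0:ℝ) ≤ 1/2) (by norm_num)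
  simp only [smul_eq_mul] at hc
  have h2 : (u + v) ^ (p + 1) ≤ 2 ^ p * (u ^ (p + 1) + v ^ (p + 1)) := by
    have heq : u + v = 2 * (1/2 * u + 1/2 * v) := by ring
    rw [heq, Real.mul_rpow (by norm_num) (by positivity),
      Real.rpow_add (by norm_num : (0:ℝ) < 2) p 1, Real.rpow_one]
    nlinarith [Real.rpow_pos_of_pos (show (0:ℝ) < 2 by norm_num) p]
  rw [hG a, hG (a - M), hG M]
  rw [← add_div, ← mul_div_assoc]
  gcongr
  calc (max a 0) ^ (p + 1) ≤ (u + v) ^ (p + 1) := h1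
    _ ≤ 2 ^ p * (u ^ (p + 1) + v ^ (p + 1)) := h2

theorem stmt6 (p : ℝ) (hp : 1 < p) (G : ℝ → ℝ)
    (hG : ∀ s : ℝ, G s = (max s 0) ^ (p + 1) / (p + 1)) :
    ∀ s τ M : ℝ,
      G |s| ≤ 2 ^ p * (G (s + τ - M) + G (s - τ - M) + G (-s + τ - M) + G (-s - τ - M))
        + 2 ^ p * G M := by
  intro s τ M
  have hp1 : (0:ℝ) < p + 1 := by linarith
  have hGnn : ∀ x : ℝ, 0 ≤ G x := fun x => by
    rw [hG]
    exact div_nonneg (Real.rpow_nonneg (le_max_right _ _) _) hp1.le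
  have hmono : ∀ x y : ℝ, x ≤ y → G x ≤ G y := fun x y hxy => by
    rw [hG, hG]
    gcongr
  have h2p : (0:ℝ) ≤ 2 ^ p := (Real.rpow_pos_of_pos (by norm_num) p).le
  have key : ∀ a : ℝ, |s| ≤ a → G (a - M) ≤
      G (s + τ - M) + G (s - τ - M) + G (-s + τ - M) + G (-s - τ - M) →
      G |s| ≤ 2 ^ p * (G (s + τ - M) + G (s - τ - M) + G (-s + τ - M) + G (-s - τ - M))
        + 2 ^ p * G M := by
    intro a hsa hsum
    have h1 := hmono _ _ hsa
    have h2 := aux6 p hp G hG a M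
    nlinarith [hGnn M]
  rcases le_total 0 s with hs | hs <;> rcases le_total 0 τ with ht | ht
  · exact key (s + τ) (by rw [abs_of_nonneg hs]; linarith)
      (by nlinarith [hGnn (s - τ - M), hGnn (-s + τ - M), hGnn (-s - τ - M)])
  · exact key (s - τ) (by rw [abs_of_nonneg hs]; linarith)
      (by nlinarith [hGnn (s + τ - M), hGnn (-s + τ - M), hGnn (-s - τ - M)])
  · exact key (-s + τ) (by rw [abs_of_nonpos hs]; linarith)
      (by nlinarith [hGnn (s + τ - M), hGnn (s - τ - M), hGnn (-s - τ - M)])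
  · exact key (-s - τ) (by rw [abs_of_nonpos hs]; linarith)
      (by nlinarith [hGnn (s + τ - M), hGnn (s - τ - M), hGnn (-s + τ - M)])
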